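/- Let d ≥ 1 be an integer, k ∈ {0,…,d−1}, and r > 0 a real number. Let S' be a (k+1)-dimensional linear subspace of ℝ^{d+1} that is not orthogonal to e_{d+1} = (0,…,0,1) ∈ ℝ^{d+1} (equivalently, S' is not contained in the hyperplane {x ∈ ℝ^{d+1} : x_{d+1} = 0}). Then the set S = {x ∈ ℝ^d : (x | r) ∈ S'} is a nonempty affine subspace of ℝ^d whose direction has dimension k, S' is the linear span of S'' = {(x | r) : x ∈ S}, and dist(r·e_{d+1}, S') / r = dist(0_d, S) / √(dist(0_d, S)² + r²). -/

import Mathlib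

open scoped RealInnerProductSpace

/-- `(q | r) ∈ ℝ^{d+1}`: the point `q ∈ ℝ^d` with the coordinate `r` appended. -/
noncomputable def lift {d : ℕ} (q : EuclideanSpace ℝ (Fin d)) (r : ℝ) :
    EuclideanSpace ℝ (Fin (d + 1)) :=
  WithLp.toLp 2 (Fin.snoc (α := fun _ => ℝ) (WithLp.ofLp q) r)

/-!
The slice `S = {x | (x | r) ∈ S'}` is the preimage of `S'` under the affine map `x ↦ (x | r)`,
so its direction is `V = {v | (v | 0) ∈ S'}`; as the last coordinate is a nonzero linear form
on `S'`, `dim V = dim S' - 1`. Fixing a point `(x₀ | r)` of `S'`, every `w ∈ S'` equals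
`(w_{d+1} / r) • (x₀ | r) + (v | 0)` with `v ∈ V`, which gives the span statement.
For the distance, let `q` be the point of `S` nearest to `0`, so that `q ⊥ V` and
`‖q‖ = dist(0, S)`. Then `(0 | r) - t • (q | r)` with `t = r² / (‖q‖² + r²)` is orthogonal both to
`(q | r)` and to `(V | 0)`, hence to `S'`, and its length is `r ‖q‖ / √(‖q‖² + r²)`.
-/

open Module

theorem AffineSubspace.direction_comap {k V₁ P₁ V₂ P₂ : Type*} [Ring k] [AddCommGroup V₁]
    [Module k V₁] [AddTorsor V₁ P₁] [AddCommGroup V₂] [Module k V₂] [AddTorsor V₂ P₂]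
    (f : P₁ →ᵃ[k] P₂) {s : AffineSubspace k P₂} {p : P₁} (hp : f p ∈ s) :
    (s.comap f).direction = s.direction.comap f.linear := by
  have hp' : p ∈ s.comap f := hp
  ext v
  rw [← vadd_mem_iff_mem_direction v hp', mem_comap, f.map_vadd,
    vadd_mem_iff_mem_direction _ hp, Submodule.mem_comap]

theorem Submodule.finrank_inf_ker_add_one {K V : Type*} [DivisionRing K] [AddCommGroup V]
    [Module K V] [FiniteDimensional K V] {W : Submodule K V} {φ : Dual K V}
    (h : ∃ w ∈ W, φ w ≠ 0) :
    finrank K ↥(W ⊓ LinearMap.ker φ) + 1 = finrank K W := by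
  obtain ⟨w, hw, hφw⟩ := h
  have hne : φ ∘ₗ W.subtype ≠ 0 := fun h0 => hφw (LinearMap.congr_fun h0 ⟨w, hw⟩)
  rw [← Dual.finrank_ker_add_one_of_ne_zero hne, LinearMap.ker_comp,
    ← Submodule.finrank_map_subtype_eq, Submodule.map_comap_subtype]

theorem EuclideanGeometry.infDist_eq_dist_of_mem_of_vsub_mem_orthogonal {V P : Type*}
    [NormedAddCommGroup V] [InnerProductSpace ℝ V] [MetricSpace P] [NormedAddTorsor V P]
    {s : AffineSubspace ℝ P} [s.direction.HasOrthogonalProjection] {p q : P} (hq : q ∈ s)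
    (hpq : p -ᵥ q ∈ s.directionᗮ) : Metric.infDist p s = dist p q := by
  have : Nonempty s := ⟨⟨q, hq⟩⟩
  rw [← dist_orthogonalProjection_eq_infDist, coe_orthogonalProjection_eq_iff_mem.2 ⟨hq, hpq⟩]

section Lift

variable {d : ℕ}

@[simp]
theorem lift_apply_last (x : EuclideanSpace ℝ (Fin d)) (r : ℝ) : lift x r (Fin.last d) = r := by
  simp [lift]

theorem lift_add (x y : EuclideanSpace ℝ (Fin d)) (r s : ℝ) :
    lift x r + lift y s = lift (x + y) (r + s) := by
  ext i
  refine Fin.lastCases ?_ (fun j => ?_) i <;> simp [lift]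

theorem lift_smul (c : ℝ) (x : EuclideanSpace ℝ (Fin d)) (r : ℝ) :
    c • lift x r = lift (c • x) (c * r) := by
  ext i
  refine Fin.lastCases ?_ (fun j => ?_) i <;> simp [lift]

theorem lift_sub (x y : EuclideanSpace ℝ (Fin d)) (r s : ℝ) :
    lift x r - lift y s = lift (x - y) (r - s) := by
  ext i
  refine Fin.lastCases ?_ (fun j => ?_) i <;> simp [lift]

theorem exists_lift_eq (y : EuclideanSpace ℝ (Fin (d + 1))) : ∃ x, lift x (y (Fin.last d)) = y :=
  ⟨WithLp.toLp 2 fun i => y i.castSucc, by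
    ext i
    refine Fin.lastCases ?_ (fun j => ?_) i <;> simp [lift]⟩

theorem inner_lift (x y : EuclideanSpace ℝ (Fin d)) (r s : ℝ) :
    ⟪lift x r, lift y s⟫ = ⟪x, y⟫ + r * s := by
  simp [PiLp.inner_apply, Fin.sum_univ_castSucc, lift, mul_comm]

theorem norm_lift_sq (x : EuclideanSpace ℝ (Fin d)) (r : ℝ) :
    ‖lift x r‖ ^ 2 = ‖x‖ ^ 2 + r ^ 2 := by
  rw [← real_inner_self_eq_norm_sq, ← real_inner_self_eq_norm_sq, inner_lift, sq]

variable (d) in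
noncomputable def liftLinear : EuclideanSpace ℝ (Fin d) →ₗ[ℝ] EuclideanSpace ℝ (Fin (d + 1)) where
  toFun x := lift x 0
  map_add' x y := by rw [lift_add, add_zero]
  map_smul' c x := by rw [RingHom.id_apply, lift_smul, mul_zero]

theorem liftLinear_apply (x : EuclideanSpace ℝ (Fin d)) : liftLinear d x = lift x 0 := rfl

theorem liftLinear_injective : Function.Injective (liftLinear d) := by
  intro x y h
  ext i
  simpa [liftLinear, lift] using congr($h i.castSucc)

theorem range_liftLinear :
    LinearMap.range (liftLinear d) = LinearMap.ker (EuclideanSpace.projₗ (Fin.last d)) := by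
  ext y
  constructor
  · rintro ⟨x, rfl⟩
    simp [liftLinear]
  · intro hy
    obtain ⟨x, hx⟩ := exists_lift_eq y
    have hy : y (Fin.last d) = 0 := hy
    exact ⟨x, by rwa [hy] at hx⟩

variable (d) in
noncomputable def liftAffine (r : ℝ) :
    EuclideanSpace ℝ (Fin d) →ᵃ[ℝ] EuclideanSpace ℝ (Fin (d + 1)) where
  toFun x := lift x r
  linear := liftLinear d
  map_vadd' x v := by rw [vadd_eq_add, vadd_eq_add, liftLinear_apply, lift_add, zero_add]

end Lift

section Slice

variable {d : ℕ} (S' : Submodule ℝ (EuclideanSpace ℝ (Fin (d + 1))))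

noncomputable def slice (r : ℝ) : AffineSubspace ℝ (EuclideanSpace ℝ (Fin d)) :=
  (S' : AffineSubspace ℝ (EuclideanSpace ℝ (Fin (d + 1)))).comap (liftAffine d r)

variable {S'} {r : ℝ}

theorem mem_slice {x : EuclideanSpace ℝ (Fin d)} : x ∈ slice S' r ↔ lift x r ∈ S' := Iff.rfl

theorem exists_mem_slice (h : ∃ y ∈ S', y (Fin.last d) ≠ 0) : ∃ x, x ∈ slice S' r := by
  obtain ⟨y, hyS, hy⟩ := h
  obtain ⟨x, hx⟩ := exists_lift_eq ((r / y (Fin.last d)) • y)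
  refine ⟨x, mem_slice.2 ?_⟩
  have hlast : ((r / y (Fin.last d)) • y) (Fin.last d) = r := by
    simp [div_mul_cancel₀ _ hy]
  rw [← hlast, hx]
  exact S'.smul_mem _ hyS

theorem direction_slice {x₀ : EuclideanSpace ℝ (Fin d)} (hx₀ : x₀ ∈ slice S' r) :
    (slice S' r).direction = S'.comap (liftLinear d) := by
  rw [slice, AffineSubspace.direction_comap _ hx₀, Submodule.toAffineSubspace_direction]
  rfl

theorem finrank_comap_liftLinear_add_one (h : ∃ y ∈ S', y (Fin.last d) ≠ 0) :
    finrank ℝ (S'.comap (liftLinear d)) + 1 = finrank ℝ S' := by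
  rw [← Submodule.finrank_inf_ker_add_one (W := S') (φ := EuclideanSpace.projₗ (Fin.last d)) h,
    ← range_liftLinear, inf_comm, ← Submodule.map_comap_eq,
    (Submodule.equivMapOfInjective _ liftLinear_injective _).finrank_eq]

theorem exists_eq_smul_lift_add_lift (hr : r ≠ 0) {x₀ : EuclideanSpace ℝ (Fin d)}
    (hx₀ : x₀ ∈ slice S' r) {w : EuclideanSpace ℝ (Fin (d + 1))} (hw : w ∈ S') :
    ∃ v ∈ S'.comap (liftLinear d), w = (w (Fin.last d) / r) • lift x₀ r + lift v 0 := by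
  set u := w - (w (Fin.last d) / r) • lift x₀ r
  have hu_last : u (Fin.last d) = 0 := by
    simp [u, div_mul_cancel₀ _ hr]
  obtain ⟨v, hv⟩ := exists_lift_eq u
  rw [hu_last] at hv
  refine ⟨v, ?_, ?_⟩
  · rw [Submodule.mem_comap, liftLinear_apply, hv]
    exact S'.sub_mem hw (S'.smul_mem _ (mem_slice.1 hx₀))
  · rw [hv, add_sub_cancel]

theorem span_lift_slice (hr : r ≠ 0) {x₀ : EuclideanSpace ℝ (Fin d)} (hx₀ : x₀ ∈ slice S' r) :
    Submodule.span ℝ ((fun x => lift x r) '' (slice S' r : Set (EuclideanSpace ℝ (Fin d)))) =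
      S' := by
  set T := Submodule.span ℝ ((fun x => lift x r) '' (slice S' r : Set (EuclideanSpace ℝ (Fin d))))
  have hlift_mem : ∀ x ∈ slice S' r, lift x r ∈ T := fun x hx => Submodule.subset_span ⟨x, hx, rfl⟩
  refine le_antisymm (Submodule.span_le.2 ?_) fun w hw => ?_
  · rintro _ ⟨x, hx, rfl⟩
    exact hx
  obtain ⟨v, hv, hw_eq⟩ := exists_eq_smul_lift_add_lift hr hx₀ hw
  have hx₀v : x₀ + v ∈ slice S' r := by
    rw [mem_slice, ← add_zero r, ← lift_add]
    exact S'.add_mem (mem_slice.1 hx₀) hv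
  have hv_eq : lift v 0 = lift (x₀ + v) r - lift x₀ r := by
    rw [lift_sub, add_sub_cancel_left, sub_self]
  rw [hw_eq, hv_eq]
  exact T.add_mem (T.smul_mem _ (hlift_mem x₀ hx₀))
    (T.sub_mem (hlift_mem _ hx₀v) (hlift_mem x₀ hx₀))

end Slice

section Distance

variable {d : ℕ} {S' : Submodule ℝ (EuclideanSpace ℝ (Fin (d + 1)))} {r : ℝ}

theorem infDist_lift_zero_eq (hr : r ≠ 0) {q : EuclideanSpace ℝ (Fin d)} (hq : q ∈ slice S' r)
    (hq_perp : ∀ v ∈ S'.comap (liftLinear d), ⟪q, v⟫ = 0) :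
    Metric.infDist (lift 0 r) (S' : Set (EuclideanSpace ℝ (Fin (d + 1)))) =
      √(r ^ 2 * ‖q‖ ^ 2 / (‖q‖ ^ 2 + r ^ 2)) := by
  have hc : ‖q‖ ^ 2 + r ^ 2 ≠ 0 := by positivity
  set t := r ^ 2 / (‖q‖ ^ 2 + r ^ 2)
  have ht : t * (‖q‖ ^ 2 + r ^ 2) = r ^ 2 := div_mul_cancel₀ _ hc
  have hdiff : lift 0 r - t • lift q r = lift (-(t • q)) (r - t * r) := by
    rw [lift_smul, lift_sub, zero_sub]
  have horth : lift 0 r - t • lift q r ∈ S'ᗮ := by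
    rw [Submodule.mem_orthogonal']
    intro w hw
    obtain ⟨v, hv, hw_eq⟩ := exists_eq_smul_lift_add_lift hr hq hw
    rw [hw_eq, hdiff, inner_add_right, real_inner_smul_right, inner_lift, inner_lift,
      inner_neg_left, inner_neg_left, real_inner_smul_left, real_inner_smul_left, hq_perp v hv,
      real_inner_self_eq_norm_sq]
    field_simp
    linear_combination -w (Fin.last d) * ht
  have hfoot := EuclideanGeometry.infDist_eq_dist_of_mem_of_vsub_mem_orthogonal
    (s := (S' : AffineSubspace ℝ (EuclideanSpace ℝ (Fin (d + 1))))) (p := lift 0 r)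
    (q := t • lift q r) (S'.smul_mem t (mem_slice.1 hq))
    (by rwa [Submodule.toAffineSubspace_direction])
  refine hfoot.trans ?_
  rw [dist_eq_norm, ← Real.sqrt_sq (norm_nonneg _), hdiff, norm_lift_sq, norm_neg,
    norm_smul, Real.norm_eq_abs, mul_pow, sq_abs]
  congr 1
  simp only [t]
  field_simp
  ring

theorem infDist_lift_zero_div (hr : 0 < r) {x₀ : EuclideanSpace ℝ (Fin d)}
    (hx₀ : x₀ ∈ slice S' r) :
    Metric.infDist (lift 0 r) (S' : Set (EuclideanSpace ℝ (Fin (d + 1)))) / r =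
      Metric.infDist 0 (slice S' r : Set (EuclideanSpace ℝ (Fin d))) /
        √(Metric.infDist 0 (slice S' r : Set (EuclideanSpace ℝ (Fin d))) ^ 2 + r ^ 2) := by
  have : Nonempty (slice S' r) := ⟨⟨x₀, hx₀⟩⟩
  obtain ⟨q, hq, hq_perp, hδ⟩ : ∃ q ∈ slice S' r, (∀ v ∈ S'.comap (liftLinear d), ⟪q, v⟫ = 0) ∧
      Metric.infDist 0 (slice S' r : Set (EuclideanSpace ℝ (Fin d))) = ‖q‖ := by
    refine ⟨_, EuclideanGeometry.orthogonalProjection_mem 0, fun v hv => ?_, ?_⟩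
    · have h : 0 -ᵥ (EuclideanGeometry.orthogonalProjection (slice S' r) 0 :
          EuclideanSpace ℝ (Fin d)) ∈ (S'.comap (liftLinear d))ᗮ := by
        rw [← direction_slice hx₀]
        exact EuclideanGeometry.vsub_orthogonalProjection_mem_direction_orthogonal _ _
      simpa [inner_neg_left] using Submodule.inner_left_of_mem_orthogonal hv h
    · rw [← EuclideanGeometry.dist_orthogonalProjection_eq_infDist, dist_zero_left]
  rw [infDist_lift_zero_eq hr.ne' hq hq_perp, hδ,
    Real.sqrt_div' _ (by positivity), Real.sqrt_mul' _ (by positivity), Real.sqrt_sq hr.le,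
    Real.sqrt_sq (norm_nonneg q)]
  field_simp

end Distance

theorem stmt8_general (d k : ℕ)
    (r : ℝ) (hr : 0 < r)
    (e : EuclideanSpace ℝ (Fin (d + 1))) (he : e = lift 0 1)
    (S' : Submodule ℝ (EuclideanSpace ℝ (Fin (d + 1))))
    (hdim : Module.finrank ℝ S' = k + 1)
    (hno : ¬ ∀ y ∈ S', ⟪y, e⟫ = (0 : ℝ)) :
    ∃ A : AffineSubspace ℝ (EuclideanSpace ℝ (Fin d)),
      (A : Set (EuclideanSpace ℝ (Fin d))) =
          {x : EuclideanSpace ℝ (Fin d) | lift x r ∈ S'} ∧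
      (A : Set (EuclideanSpace ℝ (Fin d))).Nonempty ∧
      Module.finrank ℝ A.direction = k ∧
      Submodule.span ℝ ((fun x => lift x r) '' (A : Set (EuclideanSpace ℝ (Fin d)))) = S' ∧
      Metric.infDist (r • e) (S' : Set (EuclideanSpace ℝ (Fin (d + 1)))) / r =
        Metric.infDist 0 (A : Set (EuclideanSpace ℝ (Fin d))) /
          Real.sqrt (Metric.infDist 0 (A : Set (EuclideanSpace ℝ (Fin d))) ^ 2 + r ^ 2) := by
  subst he
  have hS' : ∃ y ∈ S', y (Fin.last d) ≠ 0 := by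
    obtain ⟨y, hyS, hy⟩ : ∃ y ∈ S', ⟪y, lift 0 1⟫ ≠ 0 := by simpa using hno
    obtain ⟨x, hx⟩ := exists_lift_eq y
    refine ⟨y, hyS, ?_⟩
    rwa [← hx, inner_lift, inner_zero_right, zero_add, mul_one] at hy
  obtain ⟨x₀, hx₀⟩ := exists_mem_slice hS'
  refine ⟨slice S' r, rfl, ⟨x₀, hx₀⟩, ?_, span_lift_slice hr.ne' hx₀, ?_⟩
  · have := finrank_comap_liftLinear_add_one hS'
    rw [direction_slice hx₀]
    omega
  · rw [lift_smul, smul_zero, mul_one]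
    exact infDist_lift_zero_div hr hx₀

/-- Let `r > 0` and let `S'` be a `(k+1)`-dimensional linear subspace of
`ℝ^{d+1}` that is not orthogonal to `e_{d+1} = (0,…,0,1)` (equivalently, not contained in
the hyperplane `{x : x_{d+1} = 0}`). Then `S = {x ∈ ℝ^d : (x|r) ∈ S'}` is a nonempty
affine subspace of `ℝ^d` whose direction has dimension `k`, `S'` is the linear span of
`S'' = {(x|r) : x ∈ S}`, and
`dist(r·e_{d+1},S')/r = dist(0,S)/√(dist(0,S)² + r²)`. -/
theorem stmt8 (d k : ℕ) (hd : 1 ≤ d) (hk : k ≤ d - 1)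
    (r : ℝ) (hr : 0 < r)
    (e : EuclideanSpace ℝ (Fin (d + 1))) (he : e = lift 0 1)
    (S' : Submodule ℝ (EuclideanSpace ℝ (Fin (d + 1))))
    (hdim : Module.finrank ℝ S' = k + 1)
    (hno : ¬ ∀ y ∈ S', ⟪y, e⟫ = (0 : ℝ)) :
    ∃ A : AffineSubspace ℝ (EuclideanSpace ℝ (Fin d)),
      (A : Set (EuclideanSpace ℝ (Fin d))) =
          {x : EuclideanSpace ℝ (Fin d) | lift x r ∈ S'} ∧
      (A : Set (EuclideanSpace ℝ (Fin d))).Nonempty ∧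
      Module.finrank ℝ A.direction = k ∧
      Submodule.span ℝ ((fun x => lift x r) '' (A : Set (EuclideanSpace ℝ (Fin d)))) = S' ∧
      Metric.infDist (r • e) (S' : Set (EuclideanSpace ℝ (Fin (d + 1)))) / r =
        Metric.infDist 0 (A : Set (EuclideanSpace ℝ (Fin d))) /
          Real.sqrt (Metric.infDist 0 (A : Set (EuclideanSpace ℝ (Fin d))) ^ 2 + r ^ 2) :=
  stmt8_general d k r hr e he S' hdim hno
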